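/- Let p be an odd prime and U an F_p-vector space of dimension 6 with basis u₁,…,u₆. The trivector ω = u₁∧u₂∧u₃ + u₃∧u₄∧u₅ + u₅∧u₆∧u₁ ∈ Λ³U is not decomposable into a sum of trivectors of the form x ∧ β (x ∈ U, β ∈ Λ²U) lying in the span of ω and u₁∧u₃∧u₅; more precisely, the subgroup of ⟨ω, u₁∧u₃∧u₅⟩ generated by its elements of the form x∧β with x ∈ U, β ∈ Λ²U is exactly ⟨u₁∧u₃∧u₅⟩. -/

import Mathlib

/-!
If `a • ω + b • θ = x ∧ β`, then `x ∧ (a • ω + b • θ) = 0`. Six of the `4 × 4` minors of this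
4-vector are linear in the coordinates of `x`, with coefficients `a` and `b`, and for `a ≠ 0`
they force `x = 0`. But then `a • ω + b • θ = 0`, whose coefficient on `u₁ ∧ u₂ ∧ u₃` is `a`.
Conversely, `θ = u₁ ∧ (u₃ ∧ u₅)`.
-/

open ExteriorAlgebra

namespace ExteriorAlgebra

variable {R : Type*} [CommRing R]

noncomputable def minorForm {ι : Type*} (k : ℕ) (s : Fin k → ι) :
    ExteriorAlgebra R (ι → R) →ₗ[R] R :=
  liftAlternating (Pi.single k (Matrix.detRowAlternating.compLinearMap (LinearMap.funLeft R R s)))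

lemma minorForm_ιMulti {ι : Type*} {k : ℕ} (s : Fin k → ι) (v : Fin k → ι → R) :
    minorForm k s (ιMulti R k v) = (Matrix.of fun i j => v i (s j)).det := by
  rw [minorForm, liftAlternating_apply_ιMulti, Pi.single_eq_same]
  rfl

lemma ι_mul_ιMulti {M : Type*} [AddCommGroup M] [Module R M] {n : ℕ} (x : M) (v : Fin n → M) :
    ι R x * ιMulti R n v = ιMulti R (n + 1) (Matrix.vecCons x v) := by
  simp

end ExteriorAlgebra

namespace PartiallyDecomposable

variable {R : Type*} [CommRing R]

variable (R) in
noncomputable def omega : ExteriorAlgebra R (Fin 6 → R) :=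
  ιMulti R 3 ![Pi.single 0 1, Pi.single 1 1, Pi.single 2 1]
    + ιMulti R 3 ![Pi.single 2 1, Pi.single 3 1, Pi.single 4 1]
    + ιMulti R 3 ![Pi.single 4 1, Pi.single 5 1, Pi.single 0 1]

variable (R) in
noncomputable def theta : ExteriorAlgebra R (Fin 6 → R) :=
  ιMulti R 3 ![Pi.single 0 1, Pi.single 2 1, Pi.single 4 1]

lemma theta_eq_ι_mul :
    theta R = ι R (Pi.single 0 1) * ιMulti R 2 ![Pi.single 2 1, Pi.single 4 1] := by
  rw [ι_mul_ιMulti]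
  rfl

lemma minorForm_smul_omega_add_smul_theta (a b : R) :
    minorForm 3 ![0, 1, 2] (a • omega R + b • theta R) = a := by
  simp only [omega, theta, map_add, map_smul, minorForm_ιMulti]
  simp [Matrix.det_succ_row_zero, Fin.sum_univ_succ, Pi.single_apply, Fin.succAbove]

set_option maxHeartbeats 400000 in
lemma minor_equations_of_ι_mul_eq_zero {x : Fin 6 → R} {a b : R}
    (h : ι R x * (a • omega R + b • theta R) = 0) :
    a * x 3 = 0 ∧ a * x 1 = 0 ∧ a * x 5 = 0 ∧
      a * x 4 + b * x 1 = 0 ∧ a * x 0 + b * x 3 = 0 ∧ a * x 2 + b * x 5 = 0 := by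
  have minor (s : Fin 4 → Fin 6) : minorForm 4 s (ι R x * (a • omega R + b • theta R)) = 0 :=
    by rw [h, map_zero]
  have minors := And.intro (minor ![0, 1, 2, 3]) <| And.intro (minor ![1, 2, 3, 4]) <|
    And.intro (minor ![0, 1, 2, 5]) <| And.intro (minor ![0, 1, 2, 4]) <|
    And.intro (minor ![0, 2, 3, 4]) (minor ![0, 2, 4, 5])
  simp only [omega, theta, mul_add, mul_smul_comm, map_add, map_smul, ι_mul_ιMulti,
    minorForm_ιMulti] at minors
  simp [Matrix.det_succ_row_zero, Fin.sum_univ_succ, Pi.single_apply, Fin.succAbove] at minors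
  obtain ⟨h3, h1, h5, h4, h0, h2⟩ := minors
  exact ⟨by linear_combination -h3, h1, by linear_combination -h5, by linear_combination -h4, h0,
    by linear_combination -h2⟩

lemma eq_zero_of_ι_mul_eq_zero [NoZeroDivisors R] {x : Fin 6 → R} {a b : R} (ha : a ≠ 0)
    (h : ι R x * (a • omega R + b • theta R) = 0) : x = 0 := by
  obtain ⟨h3, h1, h5, h4, h0, h2⟩ := minor_equations_of_ι_mul_eq_zero h
  simp only [mul_eq_zero, ha, false_or] at h3 h1 h5
  simp only [h3, h1, h5, mul_zero, add_zero, mul_eq_zero, ha, false_or] at h4 h0 h2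
  funext i
  fin_cases i <;> assumption

lemma eq_zero_of_smul_omega_add_smul_theta_eq_ι_mul [NoZeroDivisors R] {x : Fin 6 → R}
    {β : ExteriorAlgebra R (Fin 6 → R)} {a b : R} (h : a • omega R + b • theta R = ι R x * β) :
    a = 0 := by
  by_contra ha
  have hx : x = 0 :=
    eq_zero_of_ι_mul_eq_zero ha (by rw [h, ← mul_assoc, ι_sq_zero, zero_mul])
  rw [hx, map_zero, zero_mul] at h
  have ha' := minorForm_smul_omega_add_smul_theta (R := R) a b
  rw [h, map_zero] at ha'
  exact ha ha'.symm

end PartiallyDecomposable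

theorem stmt14 (p : ℕ) [Fact p.Prime] :
    ∀ a b : ZMod p,
      (∃ (x : Fin 6 → ZMod p) (β : ExteriorAlgebra (ZMod p) (Fin 6 → ZMod p)),
          β ∈ ⋀[ZMod p]^2 (Fin 6 → ZMod p) ∧
          a • (ιMulti (ZMod p) 3 ![Pi.single 0 1, Pi.single 1 1, Pi.single 2 1]
              + ιMulti (ZMod p) 3 ![Pi.single 2 1, Pi.single 3 1, Pi.single 4 1]
              + ιMulti (ZMod p) 3 ![Pi.single 4 1, Pi.single 5 1, Pi.single 0 1])
            + b • ιMulti (ZMod p) 3 ![Pi.single 0 1, Pi.single 2 1, Pi.single 4 1]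
            = ι (ZMod p) x * β)
        ↔ a = 0 := by
  intro a b
  change (∃ x β, β ∈ _ ∧
    a • PartiallyDecomposable.omega _ + b • PartiallyDecomposable.theta _ = _) ↔ _
  constructor
  · rintro ⟨x, β, -, h⟩
    exact PartiallyDecomposable.eq_zero_of_smul_omega_add_smul_theta_eq_ι_mul h
  · rintro rfl
    refine ⟨Pi.single 0 1, b • ιMulti _ 2 ![Pi.single 2 1, Pi.single 4 1],
      Submodule.smul_mem _ b (ιMulti_range _ 2 (Set.mem_range_self _)), ?_⟩
    rw [zero_smul, zero_add, PartiallyDecomposable.theta_eq_ι_mul, mul_smul_comm]
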